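/- arXiv:2408.05146 — 2 statements merged into one kernel-verified Lean document; each statement's English description precedes it below -/
import Mathlib

section
/- If c < r, then the best response of agent i (maximizing its payoff given its neighbors' actions) is to cooperate if and only if exactly ⌈T·M_i⌉−1 of its neighbors cooperate. -/
noncomputable def thr (T : ℝ) (M : ℕ) : ℤ := ⌈T * (M : ℝ)⌉

noncomputable def piD (B r T : ℝ) (M k : ℕ) : ℝ := if thr T M ≤ (k : ℤ) then B else (1 - r) * B

noncomputable def piC (B r c T : ℝ) (M k : ℕ) : ℝ := piD B r T M k - c * B

/-- if `c < r`, the best response of agent `i` is to cooperate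
(i.e. cooperating yields strictly higher payoff than defecting)
iff exactly `⌈T·M_i⌉ - 1` of its neighbors cooperate. -/
theorem best_response_iff_pivotal
    (B T r c : ℝ) (M k' : ℕ)
    (hB : 0 < B) (hT0 : 0 < T) (hT1 : T ≤ 1)
    (hc0 : 0 < c) (hcr : c < r) (hr1 : r ≤ 1)
    (hM : 1 ≤ M) (hthr : 1 ≤ thr T M) :
    piC B r c T M (k' + 1) > piD B r T M k' ↔ (k' : ℤ) = thr T M - 1 := by
  unfold piC piD
  push_cast
  by_cases h1 : thr T M ≤ (k' : ℤ) + 1 <;> by_cases h2 : thr T M ≤ (k' : ℤ) <;>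
    simp [h1, h2] <;> constructor <;> intro h
  · nlinarith
  · omega
  · omega
  · nlinarith
  · nlinarith
  · omega
  · nlinarith
  · omega
end

section
/- On a clique (complete graph) of n agents with c < r and 1 ≤ ⌈T·n⌉ ≤ n, any action profile with exactly ⌈T·n⌉ cooperators is a strict Nash equilibrium of the collective risk dilemma, and hence full success (every agent's group meets the threshold) is achievable by a self-fulfilling prophecy. -/
open Finset

/-- Total number of cooperators in the population (on a clique the group of every
agent is the whole population). -/
def kCoop (n : ℕ) (a : Fin n → Bool) : ℕ := (univ.filter (fun i => a i = true)).card

/-- Payoff of agent `i` in the collective risk dilemma on a clique of `n` agents. -/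
noncomputable def payoff (B r c T : ℝ) (n : ℕ) (a : Fin n → Bool) (i : Fin n) : ℝ :=
  piD B r T n (kCoop n a) - (if a i then c * B else 0)

/-- Strict Nash equilibrium on the clique: every unilateral deviation strictly
decreases the deviator's payoff. -/
noncomputable def strictNash (B r c T : ℝ) (n : ℕ) (a : Fin n → Bool) : Prop :=
  ∀ i, payoff B r c T n (Function.update a i (!a i)) i < payoff B r c T n a i

/-- Full success on the clique: the (common) group meets the threshold. -/
def fullSuccess (T : ℝ) (n : ℕ) (a : Fin n → Bool) : Prop :=
  thr T n ≤ (kCoop n a : ℤ)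


lemma kCoop_update_int (n : ℕ) (a : Fin n → Bool) (i : Fin n) :
    (kCoop n (Function.update a i (!a i)) : ℤ)
      = (kCoop n a : ℤ) + (if a i then -1 else 1) := by
  classical
  unfold kCoop
  set S := univ.filter (fun j => a j = true) with hS
  by_cases hai : a i = true
  · have hfil : univ.filter (fun j => Function.update a i (!a i) j = true)
        = S.erase i := by
      ext j
      by_cases hj : j = i
      · subst hj; simp [Function.update_self, hai]
      · simp [Function.update_of_ne hj, hS, hj]
    have hiS : i ∈ S := by simp [hS, hai]
    have h1 : 1 ≤ S.card := Finset.card_pos.2 ⟨i, hiS⟩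
    rw [hfil, Finset.card_erase_of_mem hiS, if_pos hai]
    omega
  · have hai' : a i = false := by simpa using hai
    have hfil : univ.filter (fun j => Function.update a i (!a i) j = true)
        = insert i S := by
      ext j
      by_cases hj : j = i
      · subst hj; simp [Function.update_self, hai']
      · simp [Function.update_of_ne hj, hS, hj]
    have hiS : i ∉ S := by simp [hS, hai']
    rw [hfil, Finset.card_insert_of_notMem hiS, if_neg hai]
    omega

/-- on a clique of `n` agents with `c < r` and `1 ≤ ⌈T·n⌉ ≤ n`, any
profile with exactly `⌈T·n⌉` cooperators is a strict Nash equilibrium achieving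
full success (hence full success is achievable by a self-fulfilling prophecy). -/
theorem clique_threshold_profile_strictNash_and_success
    (B r c T : ℝ) (n : ℕ) (a : Fin n → Bool)
    (hB : 0 < B) (hc0 : 0 < c) (hcr : c < r) (hr1 : r ≤ 1)
    (hthr1 : 1 ≤ thr T n) (hthrn : thr T n ≤ (n : ℤ))
    (hk : (kCoop n a : ℤ) = thr T n) :
    strictNash B r c T n a ∧ fullSuccess T n a := by
  classical
  have hsucc : fullSuccess T n a := by
    unfold fullSuccess; omega
  refine ⟨?_, hsucc⟩
  intro i
  have hku := kCoop_update_int n a i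
  unfold payoff piD
  have hupd : Function.update a i (!a i) i = !a i := Function.update_self i _ a
  by_cases hai : a i = true
  · rw [if_pos hai] at hku
    have hnew : (kCoop n (Function.update a i (!a i)) : ℤ) = thr T n - 1 := by omega
    have hlt : ¬ thr T n ≤ (kCoop n (Function.update a i (!a i)) : ℤ) := by omega
    have hle : thr T n ≤ (kCoop n a : ℤ) := by omega
    rw [if_neg hlt, if_pos hle, hupd, hai, if_pos rfl]
    norm_num
    nlinarith
  · have hai' : a i = false := by simpa using hai
    rw [if_neg hai] at hku
    have hnew : thr T n ≤ (kCoop n (Function.update a i (!a i)) : ℤ) := by omega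
    have hle : thr T n ≤ (kCoop n a : ℤ) := by omega
    rw [if_pos hnew, if_pos hle, hupd, hai']
    norm_num
    nlinarith
end
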